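/- arXiv:math/0212179 — 4 statements merged into one kernel-verified Lean document; each statement's English description precedes it below -/
import Mathlib

section
/- Let A be an M×n matrix with integer entries and rows a_1,…,a_M, such that the convex hull of {a_1,…,a_M} ⊂ ℝⁿ has affine dimension n, and let c_1,…,c_M > 0. For p ∈ ℝⁿ put v(p) := (√(c_α)·e^{⟨a_α,p⟩})_{α=1}^M ∈ ℝ^M and P_{v} := I_M − v·vᵀ/‖v‖². Then for every p ∈ ℝⁿ, the linear map ℝⁿ → ℝ^M given by u ↦ P_{v(p)}·diag(v(p))·A·u is injective (i.e. the derivative of the projectivized Veronese map p ↦ v(p)/‖v(p)‖ is injective at every p). -/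
open Finset

noncomputable section

namespace SparseRandom

variable {M n : ℕ}

/-- The (weighted, exponential) Veronese vector `v(p) = (√c_α · e^{⟨a_α,p⟩})_α`. -/
def vMap (A : Matrix (Fin M) (Fin n) ℤ) (c : Fin M → ℝ) (p : Fin n → ℝ) : Fin M → ℝ :=
  fun α => Real.sqrt (c α) * Real.exp (∑ j, (A α j : ℝ) * p j)

/-- The orthogonal projection `P_v = I − v·vᵀ/‖v‖²` applied to a vector `w`. -/
def Pv (v w : Fin M → ℝ) : Fin M → ℝ :=
  fun α => w α - ((∑ β, v β * w β) / (∑ β, v β ^ 2)) * v α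

end SparseRandom

open SparseRandom

/-- If the convex hull of the rows of `A` has affine dimension `n` and
all weights `c_α` are positive, then for every `p ∈ ℝⁿ` the linear map
`u ↦ P_{v(p)}·diag(v(p))·A·u` (the derivative of the projectivized Veronese map) is
injective. -/
theorem statement9 (M n : ℕ) (A : Matrix (Fin M) (Fin n) ℤ) (c : Fin M → ℝ)
    (hc : ∀ α, 0 < c α)
    (hdim : affineSpan ℝ (Set.range fun α : Fin M => fun j : Fin n => (A α j : ℝ)) = ⊤)
    (p : Fin n → ℝ) :
    Function.Injective fun u : Fin n → ℝ =>
      Pv (vMap A c p) (fun α => vMap A c p α * ∑ j, (A α j : ℝ) * u j) := by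
  intro u u' h
  set a : Fin M → (Fin n → ℝ) := fun α j => (A α j : ℝ) with ha
  set v : Fin M → ℝ := vMap A c p with hv
  have hvpos : ∀ α, 0 < v α := fun α =>
    mul_pos (Real.sqrt_pos.2 (hc α)) (Real.exp_pos _)
  set d : Fin n → ℝ := fun j => u j - u' j with hd
  -- from h, componentwise difference of inner sums is a constant t
  set κ : (Fin n → ℝ) → ℝ := fun w =>
    (∑ β, v β * (v β * ∑ j, (A β j : ℝ) * w j)) / (∑ β, v β ^ 2) with hκ
  have hS : ∀ α, (∑ j, (A α j : ℝ) * u j) - κ u = (∑ j, (A α j : ℝ) * u' j) - κ u' := by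
    intro α
    have h1 := congrFun h α
    simp only [Pv] at h1
    have h2 : v α * ((∑ j, (A α j : ℝ) * u j) - κ u)
        = v α * ((∑ j, (A α j : ℝ) * u' j) - κ u') := by
      simp only [hκ]
      linear_combination h1
    exact mul_left_cancel₀ (hvpos α).ne' h2
  have hdiff : ∀ α β, ∑ j, (a α j - a β j) * d j = 0 := by
    intro α β
    have h1 := hS α
    have h2 := hS β
    have h3 : (∑ j, (A α j : ℝ) * u j) - (∑ j, (A α j : ℝ) * u' j)
        = (∑ j, (A β j : ℝ) * u j) - (∑ j, (A β j : ℝ) * u' j) := by linarith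
    simp only [ha, hd, sub_mul, mul_sub, Finset.sum_sub_distrib]
    linarith
  -- linear functional pairing with d
  set L : (Fin n → ℝ) →ₗ[ℝ] ℝ :=
    { toFun := fun x => ∑ j, x j * d j
      map_add' := by intro x y; simp [add_mul, Finset.sum_add_distrib]
      map_smul' := by intro r x; simp [Finset.mul_sum, mul_assoc] } with hL
  have hspan : vectorSpan ℝ (Set.range a) = ⊤ := by
    rw [← direction_affineSpan, hdim]
    exact AffineSubspace.direction_top ℝ _ _
  have hLzero : ∀ x : Fin n → ℝ, L x = 0 := by
    intro x
    have hx : x ∈ vectorSpan ℝ (Set.range a) := by rw [hspan]; trivial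
    refine Submodule.span_induction (p := fun y _ => L y = 0) ?_ (map_zero L) ?_ ?_ hx
    · rintro y ⟨y1, ⟨α, rfl⟩, y2, ⟨β, rfl⟩, rfl⟩
      have : L (a α - a β) = 0 := by
        simpa [hL, sub_mul, Finset.sum_sub_distrib] using hdiff α β
      simpa using this
    · intro y z _ _ hy hz; simp [map_add, hy, hz]
    · intro r y _ hy; simp [map_smul, hy]
  have hdz : L d = 0 := hLzero d
  have : ∑ j, d j ^ 2 = 0 := by
    simpa [hL, sq] using hdz
  have hdzero : ∀ j, d j = 0 := by
    intro j
    have := (Finset.sum_eq_zero_iff_of_nonneg (fun i _ => sq_nonneg (d i))).1 this j (Finset.mem_univ j)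
    exact pow_eq_zero_iff (by norm_num) |>.1 this
  funext j
  have := hdzero j
  simp only [hd] at this
  linarith
end
end

section
/- Let A ⊂ ℝⁿ be a finite set whose convex hull has dimension n, let c_a > 0 for a ∈ A, define g_A(p) := ½·log(Σ_{a∈A} c_a·e^{2⟨a,p⟩}) and H_A(p) := ½·∇²g_A(p). Then for every Lebesgue measurable U ⊆ Conv(A): (2π)ⁿ·∫_{{p ∈ ℝⁿ : ∇g_A(p) ∈ U}} det(H_A(p)) dp = πⁿ·λ(U). Equivalently, the momentum map ∇g_A is volume-preserving up to the constant πⁿ from the toric manifold (ℝⁿ×[0,2π)ⁿ with volume form det(H_A(p)) dp dq) to Conv(A). -/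
open MeasureTheory Finset

noncomputable section

namespace SparseRandom

variable {n : ℕ}

/-- The Kähler potential `g_A(p) = ½·log(∑_{a∈A} c_a·e^{2⟨a,p⟩})`. -/
def gAr (A : Finset (Fin n → ℝ)) (c : (Fin n → ℝ) → ℝ) (p : Fin n → ℝ) : ℝ :=
  (1 / 2) * Real.log (∑ a : A, c (a : Fin n → ℝ) * Real.exp (2 * ∑ j, (a : Fin n → ℝ) j * p j))

/-- The momentum map `∇g_A`. -/
def gradA (A : Finset (Fin n → ℝ)) (c : (Fin n → ℝ) → ℝ) (p : Fin n → ℝ) : Fin n → ℝ :=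
  fun j => fderiv ℝ (gAr A c) p (Pi.single j 1)

/-- `H_A(p) = ½·∇²g_A(p)`, half the Hessian of the Kähler potential. -/
def HessAr (A : Finset (Fin n → ℝ)) (c : (Fin n → ℝ) → ℝ) (p : Fin n → ℝ) :
    Matrix (Fin n) (Fin n) ℝ :=
  Matrix.of fun j k =>
    (1 / 2) * fderiv ℝ (fun x => fderiv ℝ (gAr A c) x (Pi.single j 1)) p (Pi.single k 1)

end SparseRandom

open SparseRandom

/-! The weights `c_a e^{2⟨a,p⟩}`, normalised, form a probability distribution on `A` with mean
`∇g_A(p)`, and the Jacobian `∇²g_A(p) = 2 H_A(p)` of the momentum map is twice its covariance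
matrix. As `A` affinely spans `ℝⁿ`, this matrix is positive definite, so `∇g_A` is injective
(it is strictly monotone along every line). For `u` in the interior of `Conv(A)` the function
`g_A - ⟨u, ·⟩` grows linearly, hence has a critical point `p` with `∇g_A(p) = u`; the rest of
`Conv(A)` lies in its boundary, a null set. The change of variables formula then gives
`∫_{∇g_A⁻¹ U} det(2 H_A) = λ(U)`. -/

open MeasureTheory Finset Filter Set

theorem sq_sum_mul_lt_sum_mul_sum_mul_sq {ι : Type*} {s : Finset ι} {w y : ι → ℝ}
    (hw : ∀ k ∈ s, 0 < w k) {i j : ι} (hi : i ∈ s) (hj : j ∈ s) (hy : y i ≠ y j) :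
    (∑ k ∈ s, w k * y k) ^ 2 < (∑ k ∈ s, w k) * ∑ k ∈ s, w k * y k ^ 2 := by
  have hW : 0 < ∑ k ∈ s, w k := sum_pos hw ⟨i, hi⟩
  set m := (∑ k ∈ s, w k * y k) / ∑ k ∈ s, w k with hm
  have hvar : ∑ k ∈ s, w k * (y k - m) ^ 2
      = ∑ k ∈ s, w k * y k ^ 2 - (∑ k ∈ s, w k * y k) ^ 2 / ∑ k ∈ s, w k := by
    have hexp : ∀ k ∈ s, w k * (y k - m) ^ 2 = w k * y k ^ 2 - 2 * m * (w k * y k) + m ^ 2 * w k :=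
      fun k _ => by ring
    rw [sum_congr rfl hexp, sum_add_distrib, sum_sub_distrib, ← mul_sum, ← mul_sum, hm]
    field_simp
    ring
  obtain ⟨k, hk, hkm⟩ : ∃ k ∈ s, y k ≠ m := by
    by_contra! h
    exact hy ((h i hi).trans (h j hj).symm)
  have hpos : 0 < ∑ k ∈ s, w k * (y k - m) ^ 2 :=
    sum_pos' (fun l hl => mul_nonneg (hw l hl).le (sq_nonneg _))
      ⟨k, hk, mul_pos (hw k hk) (sq_pos_of_ne_zero (sub_ne_zero.2 hkm))⟩
  rw [hvar, sub_pos, div_lt_iff₀ hW] at hpos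
  linarith

section DotProduct

variable {ι : Type*} [Fintype ι]

theorem exists_dotProduct_ne_of_affineSpan_eq_top {s : Set (ι → ℝ)} (hs : affineSpan ℝ s = ⊤)
    {v : ι → ℝ} (hv : v ≠ 0) : ∃ a ∈ s, ∃ b ∈ s, a ⬝ᵥ v ≠ b ⬝ᵥ v := by
  by_contra! h
  have hspan : vectorSpan ℝ s ≤ LinearMap.ker (dotProductBilin ℝ ℝ v) := by
    rw [vectorSpan_def, Submodule.span_le]
    rintro _ ⟨a, ha, b, hb, rfl⟩
    simp [dotProduct_comm v, h a ha b hb]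
  rw [← direction_affineSpan, hs, AffineSubspace.direction_top, top_le_iff] at hspan
  have hvv : v ⬝ᵥ v = 0 := by
    simpa using (hspan ▸ Submodule.mem_top : v ∈ LinearMap.ker (dotProductBilin ℝ ℝ v))
  exact hv (dotProduct_self_eq_zero.1 hvv)

def dotProductCLM (a : ι → ℝ) : (ι → ℝ) →L[ℝ] ℝ :=
  LinearMap.toContinuousLinearMap (dotProductBilin ℝ ℝ a)

@[simp] theorem dotProductCLM_apply (a p : ι → ℝ) : dotProductCLM a p = a ⬝ᵥ p := rfl

theorem injective_of_dotProduct_fderiv_pos {f : (ι → ℝ) → ι → ℝ}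
    {f' : (ι → ℝ) → (ι → ℝ) →L[ℝ] ι → ℝ} (hf : ∀ p, HasFDerivAt f (f' p) p)
    (hpos : ∀ p v, v ≠ 0 → 0 < v ⬝ᵥ f' p v) : Function.Injective f := by
  intro p q hpq
  by_contra hne
  set v := q - p
  have hv : v ≠ 0 := sub_ne_zero.2 (Ne.symm hne)
  set h : ℝ → ℝ := fun t => v ⬝ᵥ f (p + t • v)
  have hderiv : ∀ t, HasDerivAt h (v ⬝ᵥ f' (p + t • v) v) t := by
    intro t
    have hline : HasDerivAt (fun t : ℝ => p + t • v) v t := by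
      simpa using ((hasDerivAt_id t).smul_const v).const_add p
    exact (dotProductCLM v).hasFDerivAt.comp_hasDerivAt t ((hf _).comp_hasDerivAt t hline)
  have hmono : StrictMono h :=
    strictMono_of_deriv_pos fun t => (hderiv t).deriv ▸ hpos _ v hv
  have h01 : h 0 = h 1 := by simp [h, v, hpq]
  exact (hmono zero_lt_one).ne h01

theorem exists_dotProduct_ge_of_mem_interior_convexHull {s : Set (ι → ℝ)} {u : ι → ℝ}
    (hu : u ∈ interior (convexHull ℝ s)) :
    ∃ δ > 0, ∀ p : ι → ℝ, ∃ a ∈ s, u ⬝ᵥ p + δ * ‖p‖ ≤ a ⬝ᵥ p := by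
  obtain ⟨ε, hε, hball⟩ := Metric.isOpen_iff.1 isOpen_interior u hu
  refine ⟨ε / 2, half_pos hε, fun p => ?_⟩
  -- move from `u` by `ε / 2` towards the vertex `σ` of the unit cube that maximises `⬝ᵥ p`
  set σ : ι → ℝ := fun j => SignType.sign (p j)
  have hσ : ‖σ‖ ≤ 1 := by
    refine (pi_norm_le_iff_of_nonneg zero_le_one).2 fun j => ?_
    change ‖((SignType.sign (p j) : SignType) : ℝ)‖ ≤ 1
    generalize SignType.sign (p j) = t
    cases t <;> simp
  have hx : u + (ε / 2) • σ ∈ convexHull ℝ s := by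
    refine interior_subset (hball ?_)
    rw [Metric.mem_ball, dist_eq_norm, add_sub_cancel_left, norm_smul,
      Real.norm_of_nonneg (half_pos hε).le]
    nlinarith
  obtain ⟨a, ha, hle⟩ := (LinearMap.convexOn (dotProductBilin ℝ ℝ p) (convex_convexHull ℝ s)
    ).exists_ge_of_mem_convexHull (subset_convexHull ℝ s) hx
  refine ⟨a, ha, ?_⟩
  have hσp : ‖p‖ ≤ σ ⬝ᵥ p := by
    have habs : σ ⬝ᵥ p = ∑ j, |p j| := sum_congr rfl fun j _ => sign_mul_self (p j)
    rw [habs]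
    exact (pi_norm_le_iff_of_nonneg (sum_nonneg fun j _ => abs_nonneg _)).2 fun j =>
      single_le_sum (f := fun j => |p j|) (fun j _ => abs_nonneg _) (mem_univ j)
  have hle' : u ⬝ᵥ p + ε / 2 * σ ⬝ᵥ p ≤ a ⬝ᵥ p := by
    simpa [dotProduct_comm p, add_dotProduct, smul_dotProduct] using hle
  nlinarith

end DotProduct

theorem addHaar_image_preimage_of_interior_subset_range {α E : Type*} [NormedAddCommGroup E]
    [NormedSpace ℝ E] [MeasurableSpace E] [BorelSpace E] [FiniteDimensional ℝ E]
    (μ : Measure E) [μ.IsAddHaarMeasure] {f : α → E} {K U : Set E} (hK : Convex ℝ K)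
    (hf : interior K ⊆ range f) (hU : U ⊆ K) : μ (f '' (f ⁻¹' U)) = μ U := by
  rw [image_preimage_eq_inter_range]
  refine le_antisymm (measure_mono inter_subset_left) ?_
  have hcover : U ⊆ (U ∩ range f) ∪ frontier K := fun x hx =>
    (em (x ∈ interior K)).imp (fun hint => ⟨hx, hf hint⟩)
      (fun hint => ⟨subset_closure (hU hx), hint⟩)
  calc μ U ≤ μ (U ∩ range f) + μ (frontier K) := (measure_mono hcover).trans (measure_union_le _ _)
    _ = μ (U ∩ range f) := by rw [hK.addHaar_frontier μ, add_zero]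

namespace SparseRandom

variable {n : ℕ} {A : Finset (Fin n → ℝ)} {c : (Fin n → ℝ) → ℝ}

def weight (c : (Fin n → ℝ) → ℝ) (a p : Fin n → ℝ) : ℝ := c a * Real.exp (2 * (a ⬝ᵥ p))

variable (A c) in
def partitionFn (p : Fin n → ℝ) : ℝ := ∑ a ∈ A, weight c a p

variable (A c) in
def firstMoment (p : Fin n → ℝ) : Fin n → ℝ := ∑ a ∈ A, weight c a p • a

theorem gAr_eq_log_partitionFn : gAr A c = fun p => (1 / 2) * Real.log (partitionFn A c p) := by
  funext p
  rw [gAr, partitionFn]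
  congr 2
  exact sum_coe_sort A fun a => weight c a p

theorem partitionFn_pos (hc : ∀ a ∈ A, 0 < c a) (hA : A.Nonempty) (p : Fin n → ℝ) :
    0 < partitionFn A c p :=
  sum_pos (fun a ha => mul_pos (hc a ha) (Real.exp_pos _)) hA

theorem hasFDerivAt_weight (a p : Fin n → ℝ) :
    HasFDerivAt (weight c a) ((2 * weight c a p) • dotProductCLM a) p := by
  refine (((dotProductCLM a).hasFDerivAt.const_mul 2).exp.const_mul (c a)).congr_fderiv ?_
  ext v
  simp only [weight, FunLike.coe_smul, Pi.smul_apply, dotProductCLM_apply, smul_eq_mul]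
  ring

theorem hasFDerivAt_partitionFn (p : Fin n → ℝ) :
    HasFDerivAt (partitionFn A c) (∑ a ∈ A, (2 * weight c a p) • dotProductCLM a) p :=
  HasFDerivAt.fun_sum fun a _ => hasFDerivAt_weight a p

theorem hasFDerivAt_firstMoment (p : Fin n → ℝ) :
    HasFDerivAt (firstMoment A c) (∑ a ∈ A, ((2 * weight c a p) • dotProductCLM a).smulRight a) p :=
  HasFDerivAt.fun_sum fun a _ => (hasFDerivAt_weight a p).smul_const a

theorem hasFDerivAt_gAr (hc : ∀ a ∈ A, 0 < c a) (hA : A.Nonempty) (p : Fin n → ℝ) :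
    HasFDerivAt (gAr A c) (dotProductCLM ((partitionFn A c p)⁻¹ • firstMoment A c p)) p := by
  rw [gAr_eq_log_partitionFn]
  refine (((hasFDerivAt_partitionFn p).log (partitionFn_pos hc hA p).ne').const_mul (1 / 2)
    ).congr_fderiv ?_
  ext v
  simp only [smul_apply, _root_.sum_apply, dotProductCLM_apply, smul_eq_mul, mul_sum,
    firstMoment, smul_dotProduct, sum_dotProduct]
  exact sum_congr rfl fun _ _ => by ring

theorem gradA_eq (hc : ∀ a ∈ A, 0 < c a) (hA : A.Nonempty) :
    gradA A c = fun p => (partitionFn A c p)⁻¹ • firstMoment A c p := by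
  funext p j
  simp [gradA, (hasFDerivAt_gAr hc hA p).fderiv]

theorem hasFDerivAt_gradA (hc : ∀ a ∈ A, 0 < c a) (hA : A.Nonempty) (p : Fin n → ℝ) :
    HasFDerivAt (gradA A c)
      ((partitionFn A c p)⁻¹ • ∑ a ∈ A, ((2 * weight c a p) • dotProductCLM a).smulRight a +
        ((-(partitionFn A c p ^ 2)⁻¹) • ∑ a ∈ A, (2 * weight c a p) • dotProductCLM a).smulRight
          (firstMoment A c p)) p := by
  rw [gradA_eq hc hA]
  exact ((hasDerivAt_inv (partitionFn_pos hc hA p).ne').comp_hasFDerivAt p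
    (hasFDerivAt_partitionFn p)).fun_smul (hasFDerivAt_firstMoment p)

theorem differentiable_gradA (hc : ∀ a ∈ A, 0 < c a) (hA : A.Nonempty) :
    Differentiable ℝ (gradA A c) :=
  fun p => (hasFDerivAt_gradA hc hA p).differentiableAt

theorem dotProduct_fderiv_gradA (hc : ∀ a ∈ A, 0 < c a) (hA : A.Nonempty) (p v w : Fin n → ℝ) :
    v ⬝ᵥ fderiv ℝ (gradA A c) p w =
      2 * ((partitionFn A c p)⁻¹ * ∑ a ∈ A, weight c a p * (a ⬝ᵥ v) * (a ⬝ᵥ w) -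
        (partitionFn A c p)⁻¹ ^ 2 * (∑ a ∈ A, weight c a p * (a ⬝ᵥ v)) *
          ∑ a ∈ A, weight c a p * (a ⬝ᵥ w)) := by
  rw [(hasFDerivAt_gradA hc hA p).fderiv, dotProduct_comm]
  simp only [FunLike.coe_add, Pi.add_apply, FunLike.coe_smul, Pi.smul_apply,
    ContinuousLinearMap.smulRight_apply, _root_.sum_apply, dotProductCLM_apply,
    smul_eq_mul, firstMoment, add_dotProduct, smul_dotProduct, sum_dotProduct, mul_assoc,
    ← mul_sum, mul_comm (_ ⬝ᵥ w) (_ ⬝ᵥ v)]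
  ring

theorem dotProduct_fderiv_gradA_comm (hc : ∀ a ∈ A, 0 < c a) (hA : A.Nonempty)
    (p v w : Fin n → ℝ) :
    v ⬝ᵥ fderiv ℝ (gradA A c) p w = w ⬝ᵥ fderiv ℝ (gradA A c) p v := by
  simp only [dotProduct_fderiv_gradA hc hA, mul_right_comm _ (_ ⬝ᵥ v) (_ ⬝ᵥ w)]
  ring

theorem dotProduct_fderiv_gradA_self_pos (hdim : affineSpan ℝ (A : Set (Fin n → ℝ)) = ⊤)
    (hc : ∀ a ∈ A, 0 < c a) (hA : A.Nonempty) (p : Fin n → ℝ) {v : Fin n → ℝ} (hv : v ≠ 0) :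
    0 < v ⬝ᵥ fderiv ℝ (gradA A c) p v := by
  obtain ⟨a, ha, b, hb, hab⟩ := exists_dotProduct_ne_of_affineSpan_eq_top hdim hv
  have hvar := sq_sum_mul_lt_sum_mul_sum_mul_sq (w := fun a => weight c a p) (y := (· ⬝ᵥ v))
    (fun a ha => mul_pos (hc a ha) (Real.exp_pos _)) ha hb hab
  have hS := partitionFn_pos hc hA p
  rw [dotProduct_fderiv_gradA hc hA]
  simp only [mul_assoc, ← sq] at hvar ⊢
  rw [← partitionFn] at hvar
  generalize partitionFn A c p = S at hS hvar ⊢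
  have hdiff := sub_pos.2 hvar
  rw [show ∀ X Y : ℝ, S⁻¹ * X - S⁻¹ ^ 2 * Y = (S * X - Y) / S ^ 2 from fun X Y => by
    field_simp]
  positivity

theorem HessAr_eq (hc : ∀ a ∈ A, 0 < c a) (hA : A.Nonempty) (p : Fin n → ℝ) :
    HessAr A c p = (1 / 2 : ℝ) •
      LinearMap.toMatrix' (fderiv ℝ (gradA A c) p : (Fin n → ℝ) →ₗ[ℝ] Fin n → ℝ) := by
  ext j k
  have hj := hasFDerivAt_pi'.1 ((differentiable_gradA hc hA p).hasFDerivAt) j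
  simp only [HessAr, Matrix.of_apply, Matrix.smul_apply, LinearMap.toMatrix'_apply,
    ContinuousLinearMap.coe_coe, smul_eq_mul]
  exact congrArg (fun L => 1 / 2 * L (Pi.single k 1)) hj.fderiv

theorem posDef_toMatrix'_fderiv_gradA (hdim : affineSpan ℝ (A : Set (Fin n → ℝ)) = ⊤)
    (hc : ∀ a ∈ A, 0 < c a) (hA : A.Nonempty) (p : Fin n → ℝ) :
    (LinearMap.toMatrix' (fderiv ℝ (gradA A c) p : (Fin n → ℝ) →ₗ[ℝ] Fin n → ℝ)).PosDef := by
  rw [Matrix.posDef_iff_dotProduct_mulVec]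
  refine ⟨?_, fun v hv => ?_⟩
  · ext i j
    simpa [LinearMap.toMatrix'_apply, single_one_dotProduct] using
      dotProduct_fderiv_gradA_comm hc hA p (Pi.single j 1) (Pi.single i 1)
  · simpa [LinearMap.toMatrix'_mulVec] using dotProduct_fderiv_gradA_self_pos hdim hc hA p hv

theorem det_fderiv_gradA_pos (hdim : affineSpan ℝ (A : Set (Fin n → ℝ)) = ⊤)
    (hc : ∀ a ∈ A, 0 < c a) (hA : A.Nonempty) (p : Fin n → ℝ) :
    0 < (fderiv ℝ (gradA A c) p).det := by
  rw [ContinuousLinearMap.det, ← LinearMap.det_toMatrix']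
  exact (posDef_toMatrix'_fderiv_gradA hdim hc hA p).det_pos

theorem det_HessAr (hc : ∀ a ∈ A, 0 < c a) (hA : A.Nonempty) (p : Fin n → ℝ) :
    (HessAr A c p).det = (1 / 2) ^ n * (fderiv ℝ (gradA A c) p).det := by
  rw [HessAr_eq hc hA, Matrix.det_smul, Fintype.card_fin, LinearMap.det_toMatrix']

theorem injective_gradA (hdim : affineSpan ℝ (A : Set (Fin n → ℝ)) = ⊤)
    (hc : ∀ a ∈ A, 0 < c a) (hA : A.Nonempty) : Function.Injective (gradA A c) :=
  injective_of_dotProduct_fderiv_pos (fun p => (differentiable_gradA hc hA p).hasFDerivAt)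
    fun p _ hv => dotProduct_fderiv_gradA_self_pos hdim hc hA p hv

theorem half_log_add_dotProduct_le_gAr (hc : ∀ a ∈ A, 0 < c a) {a : Fin n → ℝ} (ha : a ∈ A)
    (p : Fin n → ℝ) : 1 / 2 * Real.log (c a) + a ⬝ᵥ p ≤ gAr A c p := by
  rw [gAr_eq_log_partitionFn]
  have hle : weight c a p ≤ partitionFn A c p :=
    single_le_sum (f := fun b => weight c b p)
      (fun b hb => (mul_pos (hc b hb) (Real.exp_pos _)).le) ha
  have hlog := Real.log_le_log (mul_pos (hc a ha) (Real.exp_pos _)) hle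
  rw [Real.log_mul (hc a ha).ne' (Real.exp_pos _).ne', Real.log_exp] at hlog
  linarith

theorem interior_convexHull_subset_range_gradA (hc : ∀ a ∈ A, 0 < c a) (hA : A.Nonempty) :
    interior (convexHull ℝ (A : Set (Fin n → ℝ))) ⊆ range (gradA A c) := by
  intro u hu
  obtain ⟨δ, hδ, hsupp⟩ := exists_dotProduct_ge_of_mem_interior_convexHull hu
  set C := A.inf' hA fun a => 1 / 2 * Real.log (c a)
  have hgrowth : ∀ p, C + δ * ‖p‖ ≤ gAr A c p - u ⬝ᵥ p := by
    intro p
    obtain ⟨a, ha, hap⟩ := hsupp p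
    have := half_log_add_dotProduct_le_gAr hc ha p
    have := inf'_le (fun a => 1 / 2 * Real.log (c a)) ha
    linarith
  have hderiv : ∀ p, HasFDerivAt (fun p => gAr A c p - u ⬝ᵥ p)
      (fderiv ℝ (gAr A c) p - dotProductCLM u) p :=
    fun p => (hasFDerivAt_gAr hc hA p).differentiableAt.hasFDerivAt.sub
      (dotProductCLM u).hasFDerivAt
  have hcoercive : Tendsto (fun p => gAr A c p - u ⬝ᵥ p) (cocompact _) atTop :=
    tendsto_atTop_mono hgrowth <| tendsto_atTop_add_const_left _ _ <|
      tendsto_norm_cocompact_atTop.const_mul_atTop hδ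
  obtain ⟨p, hp⟩ := (continuous_iff_continuousAt.2 fun p => (hderiv p).continuousAt
    ).exists_forall_le hcoercive
  have hcrit := (IsLocalMin.hasFDerivAt_eq_zero (Eventually.of_forall hp) (hderiv p))
  rw [sub_eq_zero] at hcrit
  exact ⟨p, funext fun j => by simp [gradA, hcrit]⟩

end SparseRandom

/-- The momentum map `∇g_A` is volume-preserving up to the constant
`πⁿ` : for every measurable `U ⊆ Conv(A)`,
`(2π)ⁿ·∫_{{p : ∇g_A(p) ∈ U}} det(H_A(p)) dp = πⁿ·λ(U)`. -/
theorem statement11 (n : ℕ) (A : Finset (Fin n → ℝ))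
    (hdim : affineSpan ℝ (A : Set (Fin n → ℝ)) = ⊤)
    (c : (Fin n → ℝ) → ℝ) (hc : ∀ a ∈ A, 0 < c a)
    (U : Set (Fin n → ℝ)) (hU : MeasurableSet U)
    (hUsub : U ⊆ convexHull ℝ (A : Set (Fin n → ℝ))) :
    (2 * Real.pi) ^ n * ∫ p in {p : Fin n → ℝ | gradA A c p ∈ U}, (HessAr A c p).det
      = Real.pi ^ n * (volume U).toReal := by
  have hA : A.Nonempty :=
    Finset.coe_nonempty.1 ((affineSpan_nonempty ℝ).1 (by rw [hdim]; exact ⟨0, trivial⟩))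
  have hs : MeasurableSet (gradA A c ⁻¹' U) :=
    hU.preimage (differentiable_gradA hc hA).continuous.measurable
  have hcov : ∫ p in gradA A c ⁻¹' U, |(fderiv ℝ (gradA A c) p).det| = (volume U).toReal := by
    simpa [measureReal_def, addHaar_image_preimage_of_interior_subset_range volume
      (convex_convexHull ℝ _) (interior_convexHull_subset_range_gradA hc hA) hUsub] using
      (integral_image_eq_integral_abs_det_fderiv_smul volume hs
        (fun p _ => (differentiable_gradA hc hA p).hasFDerivAt.hasFDerivWithinAt)
        (injective_gradA hdim hc hA).injOn fun _ => (1 : ℝ)).symm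
  have hdet : ∀ p, (HessAr A c p).det = (1 / 2) ^ n * |(fderiv ℝ (gradA A c) p).det| :=
    fun p => by rw [det_HessAr hc hA, abs_of_pos (det_fderiv_gradA_pos hdim hc hA p)]
  calc (2 * Real.pi) ^ n * ∫ p in gradA A c ⁻¹' U, (HessAr A c p).det
      = Real.pi ^ n * ∫ p in gradA A c ⁻¹' U, |(fderiv ℝ (gradA A c) p).det| := by
        simp_rw [hdet, integral_const_mul, ← mul_assoc, ← mul_pow,
          show 2 * Real.pi * (1 / 2) = Real.pi by ring]
    _ = Real.pi ^ n * (volume U).toReal := by rw [hcov]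
end
end

section
/- (Legendre's convexity theorem.) Let f : ℝⁿ → ℝ be convex and twice continuously differentiable. Then the closure in ℝⁿ of the image of its gradient, cl{∇f(x) : x ∈ ℝⁿ}, is a convex set. -/
/-!
Let `D` be the set of slopes `y` for which `f - ⟪y, ·⟫` is bounded below (the effective domain of
the convex conjugate `f*`). `D` is convex for any `f`, since `f - ⟪y, ·⟫` is affine in `y`.
By the tangent-plane inequality every gradient lies in `D`. Conversely, for `y ∈ D` the coercive
function `f - ⟪y, ·⟫ + ε √(1 + ‖x‖²)` attains its minimum, and at a minimizer `z` we get
`‖∇f z - y‖ < ε` because the penalty has gradient of norm `< 1`.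
Hence `cl (range ∇f) = cl D`, which is convex.
-/

open InnerProductSpace Set Filter Topology
open scoped RealInnerProductSpace

lemma ConvexOn.le_sub_of_hasFDerivAt {E : Type*} [NormedAddCommGroup E] [NormedSpace ℝ E]
    {f : E → ℝ} {f' : E →L[ℝ] ℝ} {x : E} (hf : ConvexOn ℝ univ f) (hf' : HasFDerivAt f f' x)
    (y : E) : f' (y - x) ≤ f y - f x := by
  have hline : ConvexOn ℝ univ (f ∘ AffineMap.lineMap (k := ℝ) x y) := hf.comp_affineMap _
  have hderiv : HasDerivAt (f ∘ AffineMap.lineMap (k := ℝ) x y) (f' (y - x)) 0 := by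
    refine HasFDerivAt.comp_hasDerivAt (0 : ℝ) ?_ AffineMap.hasDerivAt_lineMap
    simpa using hf'
  simpa [slope_def_field] using
    hline.le_slope_of_hasDerivAt (mem_univ 0) (mem_univ 1) zero_lt_one hderiv

section

variable {E : Type*} [NormedAddCommGroup E] [InnerProductSpace ℝ E]

def conjugateDomain (f : E → ℝ) : Set E :=
  {y | BddBelow (range fun x => f x - ⟪y, x⟫)}

lemma convex_conjugateDomain (f : E → ℝ) : Convex ℝ (conjugateDomain f) := by
  rintro y₁ ⟨m₁, hm₁⟩ y₂ ⟨m₂, hm₂⟩ a b ha hb hab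
  refine ⟨a * m₁ + b * m₂, forall_mem_range.2 fun x => ?_⟩
  have h₁ : m₁ ≤ f x - ⟪y₁, x⟫ := hm₁ (mem_range_self x)
  have h₂ : m₂ ≤ f x - ⟪y₂, x⟫ := hm₂ (mem_range_self x)
  calc a * m₁ + b * m₂ ≤ a * (f x - ⟪y₁, x⟫) + b * (f x - ⟪y₂, x⟫) := by gcongr
    _ = f x - ⟪a • y₁ + b • y₂, x⟫ := by
      rw [inner_add_left, real_inner_smul_left, real_inner_smul_left]
      linear_combination (f x) * hab

lemma ConvexOn.gradient_mem_conjugateDomain [CompleteSpace E] {f : E → ℝ}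
    (hf : ConvexOn ℝ univ f) {x : E} (hx : DifferentiableAt ℝ f x) :
    gradient f x ∈ conjugateDomain f := by
  refine ⟨f x - ⟪gradient f x, x⟫, forall_mem_range.2 fun z => ?_⟩
  have := hf.le_sub_of_hasFDerivAt hx.hasFDerivAt z
  rw [← toDual_gradient, toDual_apply_apply, inner_sub_right] at this
  linarith

lemma hasFDerivAt_sqrt_one_add_norm_sq (x : E) :
    HasFDerivAt (fun z : E => √(1 + ‖z‖ ^ 2))
      (innerSL ℝ (OpenPartialHomeomorph.univUnitBall x)) x := by
  have hpos : 0 < 1 + ‖x‖ ^ 2 := by positivity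
  convert (((hasStrictFDerivAt_norm_sq x).hasFDerivAt).const_add 1).sqrt hpos.ne' using 1
  ext v
  simp only [OpenPartialHomeomorph.univUnitBall_apply, map_smul, smul_apply, coe_innerSL_apply,
    smul_eq_mul, one_div, mul_inv_rev, nsmul_eq_mul, Nat.cast_ofNat]
  field_simp

lemma exists_norm_fderiv_lt_of_bddBelow [ProperSpace E] {g : E → ℝ} (hg : Differentiable ℝ g)
    (hbdd : BddBelow (range g)) {ε : ℝ} (hε : 0 < ε) : ∃ z, ‖fderiv ℝ g z‖ < ε := by
  obtain ⟨m, hm⟩ := hbdd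
  set G : E → ℝ := fun x => g x + ε * √(1 + ‖x‖ ^ 2)
  have hcoercive : Tendsto G (cocompact E) atTop := by
    refine tendsto_atTop_mono (fun x => ?_)
      (tendsto_atTop_add_const_left _ m (tendsto_norm_cocompact_atTop.const_mul_atTop hε))
    have hgx : m ≤ g x := hm (mem_range_self x)
    have hnorm : ‖x‖ ≤ √(1 + ‖x‖ ^ 2) := Real.le_sqrt_of_sq_le (by linarith)
    dsimp only [G]
    gcongr
  obtain ⟨z, hz⟩ := (hg.continuous.add (by fun_prop)).exists_forall_le hcoercive
  have hGz := (hg z).hasFDerivAt.add ((hasFDerivAt_sqrt_one_add_norm_sq z).const_mul ε)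
  have hcrit := IsLocalMin.hasFDerivAt_eq_zero (Eventually.of_forall hz) hGz
  refine ⟨z, ?_⟩
  rw [eq_neg_of_add_eq_zero_left hcrit, norm_neg, norm_smul, innerSL_apply_norm,
    Real.norm_of_nonneg hε.le]
  exact mul_lt_of_lt_one_right hε <| mem_ball_zero_iff.1 <|
    OpenPartialHomeomorph.univUnitBall.map_source (mem_univ z)

lemma conjugateDomain_subset_closure_range_gradient [ProperSpace E] {f : E → ℝ}
    (hf : Differentiable ℝ f) : conjugateDomain f ⊆ closure (range (gradient f)) := by
  intro y hy
  refine Metric.mem_closure_iff.2 fun ε hε => ?_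
  have hderiv (z : E) : HasFDerivAt (fun x => f x - ⟪y, x⟫) (fderiv ℝ f z - innerSL ℝ y) z :=
    (hf z).hasFDerivAt.sub (innerSL ℝ y).hasFDerivAt
  obtain ⟨z, hz⟩ := exists_norm_fderiv_lt_of_bddBelow (fun z => (hderiv z).differentiableAt) hy hε
  refine ⟨gradient f z, mem_range_self z, ?_⟩
  rw [(hderiv z).fderiv] at hz
  rwa [dist_comm, dist_eq_norm, ← (toDual ℝ E).norm_map, map_sub, toDual_gradient]

end

/-- **Legendre's convexity theorem.** If `f : ℝⁿ → ℝ` is convex and twice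
continuously differentiable, then the closure of the image of its gradient is convex. -/
theorem statement12 (n : ℕ) (f : EuclideanSpace ℝ (Fin n) → ℝ)
    (hconv : ConvexOn ℝ Set.univ f) (hsmooth : ContDiff ℝ 2 f) :
    Convex ℝ (closure (Set.range (gradient f))) := by
  have hf : Differentiable ℝ f := hsmooth.differentiable (by norm_num)
  have hclosure : closure (range (gradient f)) = closure (conjugateDomain f) :=
    (closure_mono (range_subset_iff.2 fun x => hconv.gradient_mem_conjugateDomain (hf x))).antisymm
      (closure_minimal (conjugateDomain_subset_closure_range_gradient hf) isClosed_closure)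
  exact hclosure ▸ (convex_conjugateDomain f).closure
end

section
/- Let A_1,…,A_n ⊂ ℤⁿ be finite sets with diagonal positive definite covariances C_i = diag(c^i_a)_{a∈A_i}. Let (p,q) ∈ ℝⁿ×ℝⁿ, z := exp(p+iq), and let f ∈ ℱ satisfy f(z) = 0 with D̂(f) invertible. Let DG_f : ℱ → ℂⁿ be the linear map ḟ ↦ D̂(f)^{−1}·(ḟ¹(z),…,ḟⁿ(z))ᵀ, and let DG_f^* denote its adjoint with respect to the inner product ⟨ḟ,ġ⟩ := Σ_{i=1}^n Σ_{a∈A_i} ḟ^i_a·conj(ġ^i_a)/c^i_a on ℱ and the standard Hermitian inner product on ℂⁿ. Then det( DG_f ∘ DG_f^* ) = ( Π_{i=1}^n Σ_{a∈A_i} c^i_a·e^{2⟨a,p⟩} ) / |det D̂(f)|². -/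
open MeasureTheory Finset
open scoped ENNReal Pointwise

noncomputable section

namespace SparseRandom

variable {n : ℕ}

/-- `exp(p+iq) ∈ (ℂ*)ⁿ` in logarithmic coordinates. -/
def zexp (p q : Fin n → ℝ) : Fin n → ℂ :=
  fun j => Complex.exp ((p j : ℂ) + (q j : ℂ) * Complex.I)

/-- The (Laurent) monomial `z^a` for an integer exponent vector `a`. -/
def mono (z : Fin n → ℂ) (a : Fin n → ℤ) : ℂ := ∏ j, z j ^ (a j)

/-- Evaluation of the polynomial with support `A` and coefficient vector `f` at `z`. -/
def evalP {A : Finset (Fin n → ℤ)} (f : A → ℂ) (z : Fin n → ℂ) : ℂ :=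
  ∑ a : A, f a * mono z (a : Fin n → ℤ)

/-- The squared weighted norm `‖f‖²_{C⁻¹} = ∑_a |f_a|²/c_a`. -/
def nsq {A : Finset (Fin n → ℤ)} (c : (Fin n → ℤ) → ℝ) (f : A → ℂ) : ℝ :=
  ∑ a : A, Complex.normSq (f a) / c (a : Fin n → ℤ)

/-- The Gaussian probability measure `γ = ⊗ᵢ γ_{Aᵢ,Cᵢ}` on the system space
`ℱ = Πᵢ ℱ_ℂ(Aᵢ)`, given by its density w.r.t. Lebesgue measure. -/
def gauss (A : Fin n → Finset (Fin n → ℤ)) (c : Fin n → (Fin n → ℤ) → ℝ) :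
    Measure ((i : Fin n) → (A i) → ℂ) :=
  volume.withDensity fun f => ENNReal.ofReal
    (∏ i, (((2 * Real.pi) ^ (A i).card)⁻¹ * (∏ a : A i, c i (a : Fin n → ℤ))⁻¹ *
      Real.exp (- nsq (c i) (f i) / 2)))

/-- `z` is a common root of the system `f`. -/
def isRootAt (A : Fin n → Finset (Fin n → ℤ)) (f : (i : Fin n) → (A i) → ℂ)
    (z : Fin n → ℂ) : Prop :=
  ∀ i, evalP (f i) z = 0

/-- The Jacobian matrix `(∂f^i/∂x_j)` of the system `f` at a point `z ∈ (ℂ*)ⁿ`. -/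
def jac (A : Fin n → Finset (Fin n → ℤ)) (f : (i : Fin n) → (A i) → ℂ)
    (z : Fin n → ℂ) : Matrix (Fin n) (Fin n) ℂ :=
  Matrix.of fun i j => ∑ a : A i, f i a * ((a : Fin n → ℤ) j : ℂ) * mono z (a : Fin n → ℤ) / z j

/-- The matrix `D̂(f)_{ij} = z_j ∂f^i/∂x_j(z)`, i.e. the derivative of the system in the
logarithmic variable `p+iq`. -/
def Dhat (A : Fin n → Finset (Fin n → ℤ)) (f : (i : Fin n) → (A i) → ℂ)
    (z : Fin n → ℂ) : Matrix (Fin n) (Fin n) ℂ :=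
  Matrix.of fun i j => ∑ a : A i, f i a * ((a : Fin n → ℤ) j : ℂ) * mono z (a : Fin n → ℤ)

/-- `Σ_{(p,q)}`: systems with `exp(p+iq)` as a degenerate root. -/
def SigmaPQ (A : Fin n → Finset (Fin n → ℤ)) (p q : Fin n → ℝ) :
    Set ((i : Fin n) → (A i) → ℂ) :=
  {g | isRootAt A g (zexp p q) ∧ (jac A g (zexp p q)).det = 0}

/-- Multiprojective distance `d_ℙ(f,g)`. -/
def dP (c : Fin n → (Fin n → ℤ) → ℝ) {A : Fin n → Finset (Fin n → ℤ)}
    (f g : (i : Fin n) → (A i) → ℂ) : ℝ :=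
  Real.sqrt (∑ i, (⨅ lam : ℂ, nsq (c i) (fun a => f i a - lam * g i a)) / nsq (c i) (f i))

/-- Distance from `f` to a set `S` of systems. -/
def dPS (c : Fin n → (Fin n → ℤ) → ℝ) {A : Fin n → Finset (Fin n → ℤ)}
    (f : (i : Fin n) → (A i) → ℂ) (S : Set ((i : Fin n) → (A i) → ℂ)) : ℝ :=
  sInf ((dP c f) '' S)

/-- The image of `A ⊂ ℤⁿ` in `ℝⁿ`. -/
def coeA (A : Finset (Fin n → ℤ)) : Set (Fin n → ℝ) :=
  (fun (a : Fin n → ℤ) (j : Fin n) => (a j : ℝ)) '' (A : Set (Fin n → ℤ))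

/-- The Kähler potential `g_A(p) = ½ log ∑_{a∈A} c_a e^{2⟨a,p⟩}`. -/
def gA (A : Finset (Fin n → ℤ)) (c : (Fin n → ℤ) → ℝ) (p : Fin n → ℝ) : ℝ :=
  (1 / 2) * Real.log (∑ a : A, c (a : Fin n → ℤ) * Real.exp (2 * ∑ j, ((a : Fin n → ℤ) j : ℝ) * p j))

/-- `H_A(p) = ½ ∇² g_A(p)`, half the Hessian of the Kähler potential. -/
def HessA (A : Finset (Fin n → ℤ)) (c : (Fin n → ℤ) → ℝ) (p : Fin n → ℝ) :
    Matrix (Fin n) (Fin n) ℝ :=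
  Matrix.of fun j k =>
    (1 / 2) * fderiv ℝ (fun x => fderiv ℝ (gA A c) x (Pi.single j 1)) p (Pi.single k 1)

/-- The mixed integrand `I(p)`, the coefficient of the volume form in
`(−1)^{n(n−1)/2} ω_{A_1} ∧ ⋯ ∧ ω_{A_n}`. -/
def mixedI (A : Fin n → Finset (Fin n → ℤ)) (c : Fin n → (Fin n → ℤ) → ℝ)
    (p : Fin n → ℝ) : ℝ :=
  ∑ σ : Equiv.Perm (Fin n), ∑ τ : Equiv.Perm (Fin n),
    ((Equiv.Perm.sign σ : ℤ) : ℝ) * ((Equiv.Perm.sign τ : ℤ) : ℝ) *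
      ∏ i, HessA (A i) (c i) p (σ i) (τ i)

end SparseRandom

namespace SparseRandom

variable {n : ℕ}

/-- The standard Hermitian inner product on `ℂⁿ`. -/
def innerCn (x y : Fin n → ℂ) : ℂ := ∑ i, x i * (starRingEnd ℂ) (y i)

/-- The weighted Hermitian inner product `⟨ḟ,ġ⟩ = ∑ᵢ ∑_a ḟ^i_a·conj(ġ^i_a)/c^i_a` on the
system space `ℱ`. -/
def innerF (A : Fin n → Finset (Fin n → ℤ)) (c : Fin n → (Fin n → ℤ) → ℝ)
    (f g : (i : Fin n) → (A i) → ℂ) : ℂ :=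
  ∑ i, ∑ a : A i, f i a * (starRingEnd ℂ) (g i a) / (c i (a : Fin n → ℤ) : ℂ)

/-- The condition map `DG_f : ḟ ↦ D̂(f)⁻¹·(ḟ¹(z),…,ḟⁿ(z))ᵀ`. -/
def DG (A : Fin n → Finset (Fin n → ℤ)) (f : (i : Fin n) → (A i) → ℂ)
    (z : Fin n → ℂ) (df : (i : Fin n) → (A i) → ℂ) : Fin n → ℂ :=
  (Dhat A f z)⁻¹.mulVec fun i => evalP (df i) z

end SparseRandom

/-!
Testing the adjointness relation on the monomial basis of `ℱ` identifies the adjoint: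
`(DG_f^* u)^i_a = cⁱ_a · conj(z^a) · (D̂(f)⁻ᴴ u)_i`. Evaluating at `z` turns `conj(z^a) z^a` into
`|z^a|² = e^{2⟨a,p⟩}`, so `DG_f ∘ DG_f^* = D̂(f)⁻¹ · Δ · D̂(f)⁻ᴴ` with `Δ` the diagonal matrix of the
sums `∑_a cⁱ_a e^{2⟨a,p⟩}`, and its determinant is `det Δ · |det D̂(f)|⁻²`.
-/

open scoped Matrix

namespace SparseRandom

variable {n : ℕ}

lemma normSq_mono_zexp (p q : Fin n → ℝ) (a : Fin n → ℤ) :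
    Complex.normSq (mono (zexp p q) a) = Real.exp (2 * ∑ j, (a j : ℝ) * p j) := by
  have hmono : mono (zexp p q) a
      = Complex.exp (∑ j, (a j : ℂ) * ((p j : ℂ) + (q j : ℂ) * Complex.I)) := by
    rw [Complex.exp_sum]
    exact Finset.prod_congr rfl fun j _ => by rw [zexp, ← Complex.exp_int_mul]
  have hre : (∑ j, (a j : ℂ) * ((p j : ℂ) + (q j : ℂ) * Complex.I)).re
      = ∑ j, (a j : ℝ) * p j := by
    simp [Complex.re_sum, Complex.mul_re]
  rw [hmono, Complex.normSq_eq_norm_sq, Complex.norm_exp, hre, ← Real.exp_nat_mul]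
  norm_num

lemma evalP_single {A : Finset (Fin n → ℤ)} (a : A) (z : Fin n → ℂ) :
    evalP (Pi.single a 1) z = mono z a := by
  simp [evalP, Pi.single_apply]

section Adjoint

variable {A : Fin n → Finset (Fin n → ℤ)}

abbrev basisF (j : Fin n) (a : A j) : (i : Fin n) → (A i) → ℂ :=
  Pi.single j (Pi.single a 1)

lemma innerF_basisF_left (c : Fin n → (Fin n → ℤ) → ℝ) (j : Fin n) (a : A j)
    (g : (i : Fin n) → (A i) → ℂ) :
    innerF A c (basisF j a) g = (starRingEnd ℂ) (g j a) / (c j a : ℂ) := by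
  rw [innerF, Finset.sum_eq_single j (fun i _ hi => by simp [basisF, hi])
    (by simp), Finset.sum_eq_single a (fun b _ hb => by simp [basisF, hb]) (by simp)]
  simp [basisF]

lemma DG_basisF (f : (i : Fin n) → (A i) → ℂ) (z : Fin n → ℂ) (j : Fin n) (a : A j) :
    DG A f z (basisF j a) = mono z a • ((Dhat A f z)⁻¹).col j := by
  have hval : (fun i => evalP (basisF j a i) z) = Pi.single j (mono z a) := by
    ext i
    rcases eq_or_ne i j with rfl | hi
    · simp [basisF, evalP_single]
    · simp [basisF, hi, evalP]
  rw [DG, hval, Matrix.mulVec_single, op_smul_eq_smul]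

variable {c : Fin n → (Fin n → ℤ) → ℝ} {f : (i : Fin n) → (A i) → ℂ} {z : Fin n → ℂ}
  {Gstar : (Fin n → ℂ) → ((i : Fin n) → (A i) → ℂ)}

lemma adjoint_apply (hc : ∀ i, ∀ a ∈ A i, 0 < c i a)
    (hadj : ∀ df u, innerCn (DG A f z df) u = innerF A c df (Gstar u))
    (u : Fin n → ℂ) (j : Fin n) (a : A j) :
    Gstar u j a = c j a * (starRingEnd ℂ) (mono z a) * ((Dhat A f z)⁻¹ᴴ *ᵥ u) j := by
  have hca : (c j a : ℂ) ≠ 0 := by exact_mod_cast (hc j a a.2).ne'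
  have h := hadj (basisF j a) u
  rw [innerF_basisF_left, DG_basisF, eq_div_iff hca] at h
  have hconj := congrArg (starRingEnd ℂ) h
  simp only [map_mul, Complex.conj_conj, Complex.conj_ofReal] at hconj
  rw [← hconj]
  simp only [innerCn, Pi.smul_apply, Matrix.col_apply, smul_eq_mul, map_sum, map_mul,
    Complex.conj_conj, Finset.sum_mul, Matrix.mulVec, dotProduct, Matrix.conjTranspose_apply,
    RCLike.star_def, Finset.mul_sum]
  exact Finset.sum_congr rfl fun i _ => by ring

lemma evalP_adjoint (hc : ∀ i, ∀ a ∈ A i, 0 < c i a)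
    (hadj : ∀ df u, innerCn (DG A f z df) u = innerF A c df (Gstar u))
    (u : Fin n → ℂ) (j : Fin n) :
    evalP (Gstar u j) z
      = ((∑ a : A j, c j a * Complex.normSq (mono z a) : ℝ) : ℂ) *
          ((Dhat A f z)⁻¹ᴴ *ᵥ u) j := by
  simp only [evalP, adjoint_apply hc hadj, Complex.ofReal_sum, Finset.sum_mul,
    Complex.ofReal_mul, Complex.normSq_eq_conj_mul_self]
  exact Finset.sum_congr rfl fun a _ => by ring

lemma DG_comp_adjoint (hc : ∀ i, ∀ a ∈ A i, 0 < c i a)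
    (hadj : ∀ df u, innerCn (DG A f z df) u = innerF A c df (Gstar u)) :
    (Matrix.of fun i k : Fin n => DG A f z (Gstar (Pi.single k 1)) i)
      = (Dhat A f z)⁻¹ *
          Matrix.diagonal (fun j => ((∑ a : A j, c j a * Complex.normSq (mono z a) : ℝ) : ℂ)) *
          (Dhat A f z)⁻¹ᴴ := by
  refine Matrix.ext_of_mulVec_single fun k => ?_
  have hcol : (fun j => evalP (Gstar (Pi.single k 1) j) z)
      = Matrix.diagonal (fun j => ((∑ a : A j, c j a * Complex.normSq (mono z a) : ℝ) : ℂ)) *ᵥ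
          ((Dhat A f z)⁻¹ᴴ *ᵥ Pi.single k 1) := by
    ext j
    rw [evalP_adjoint hc hadj, Matrix.mulVec_diagonal]
  rw [← Matrix.mulVec_mulVec, ← Matrix.mulVec_mulVec, ← hcol, Matrix.mulVec_single_one]
  rfl

end Adjoint

lemma det_mul_diagonal_mul_conjTranspose {ι : Type*} [Fintype ι] [DecidableEq ι]
    (E : Matrix ι ι ℂ) (d : ι → ℝ) :
    (E * Matrix.diagonal (fun j => (d j : ℂ)) * Eᴴ).det = ((∏ j, d j) * ‖E.det‖ ^ 2 : ℝ) := by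
  rw [Matrix.det_mul, Matrix.det_mul, Matrix.det_diagonal, Matrix.det_conjTranspose,
    Complex.star_def, mul_right_comm, Complex.mul_conj', Complex.ofReal_mul,
    Complex.ofReal_prod]
  push_cast
  ring

end SparseRandom

open SparseRandom

theorem statement14_general (n : ℕ) (A : Fin n → Finset (Fin n → ℤ))
    (c : Fin n → (Fin n → ℤ) → ℝ) (hc : ∀ i, ∀ a ∈ A i, 0 < c i a)
    (p q : Fin n → ℝ) (f : (i : Fin n) → (A i) → ℂ)
    (Gstar : (Fin n → ℂ) → ((i : Fin n) → (A i) → ℂ))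
    (hadj : ∀ (df : (i : Fin n) → (A i) → ℂ) (u : Fin n → ℂ),
      innerCn (DG A f (zexp p q) df) u = innerF A c df (Gstar u)) :
    (Matrix.of fun i k : Fin n => DG A f (zexp p q) (Gstar (Pi.single k 1)) i).det
      = (((∏ i, ∑ a : A i, c i (a : Fin n → ℤ) *
            Real.exp (2 * ∑ j, ((a : Fin n → ℤ) j : ℝ) * p j)) /
          ‖(Dhat A f (zexp p q)).det‖ ^ 2 : ℝ) : ℂ) := by
  rw [DG_comp_adjoint hc hadj, det_mul_diagonal_mul_conjTranspose, Matrix.det_nonsing_inv,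
    Ring.inverse_eq_inv', norm_inv, inv_pow, ← div_eq_mul_inv]
  simp only [normSq_mono_zexp]

/-- **Determinant of the condition matrix.** If `z = exp(p+iq)` is a
nondegenerate root of `f` and `DG_f^*` is the adjoint of `DG_f` with respect to the
weighted inner product on `ℱ` and the standard Hermitian product on `ℂⁿ`, then
`det(DG_f ∘ DG_f^*) = (∏ᵢ ∑_{a∈Aᵢ} cⁱ_a·e^{2⟨a,p⟩}) / |det D̂(f)|²`. -/
theorem statement14 (n : ℕ) (hn : 1 ≤ n) (A : Fin n → Finset (Fin n → ℤ))
    (c : Fin n → (Fin n → ℤ) → ℝ) (hc : ∀ i, ∀ a ∈ A i, 0 < c i a)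
    (p q : Fin n → ℝ) (f : (i : Fin n) → (A i) → ℂ)
    (hroot : isRootAt A f (zexp p q))
    (hnd : (Dhat A f (zexp p q)).det ≠ 0)
    (Gstar : (Fin n → ℂ) → ((i : Fin n) → (A i) → ℂ))
    (hadj : ∀ (df : (i : Fin n) → (A i) → ℂ) (u : Fin n → ℂ),
      innerCn (DG A f (zexp p q) df) u = innerF A c df (Gstar u)) :
    (Matrix.of fun i k : Fin n => DG A f (zexp p q) (Gstar (Pi.single k 1)) i).det
      = (((∏ i, ∑ a : A i, c i (a : Fin n → ℤ) *
            Real.exp (2 * ∑ j, ((a : Fin n → ℤ) j : ℝ) * p j)) /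
          ‖(Dhat A f (zexp p q)).det‖ ^ 2 : ℝ) : ℂ) :=
  statement14_general n A c hc p q f Gstar hadj
end
end
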